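/- Let F be a field of characteristic ≠ 2 and for i = 1, 2 let V_i be a 3-dimensional F-vector space, b_i a nondegenerate symmetric bilinear form on V_i, and ×_i an anticommutative bilinear product on V_i satisfying (u ×_i v) ×_i v = b_i(u,v)v − b_i(v,v)u for all u, v ∈ V_i (so that Q(V_i, b_i, ×_i) is a quaternion algebra). Let μ₁, μ₂ ∈ F be nonzero. If the algebras Q(V₁, μ₁b₁, ×₁) and Q(V₂, μ₂b₂, ×₂) are isomorphic as unital F-algebras, then μ₁ = μ₂ and the quaternion algebras Q(V₁, b₁, ×₁) and Q(V₂, b₂, ×₂) are isomorphic as F-algebras. -/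

import Mathlib

/-- The multiplication of the quadratic algebra `Q(V, b, ×)` on `F1 ⊕ V ≃ F × V`:
`(α1+u)(β1+v) = (αβ − b(u,v))1 + (αv + βu + u×v)`. -/
def qAlgMul {F V : Type*} [Field F] [AddCommGroup V] [Module F V]
    (b : V →ₗ[F] V →ₗ[F] F) (c : V →ₗ[F] V →ₗ[F] V) (x y : F × V) : F × V :=
  (x.1 * y.1 - b x.2 y.2, x.1 • y.2 + y.1 • x.2 + c x.2 y.2)

/-- Let `F` be a field of characteristic `≠ 2` and, for `i = 1, 2`, let `V_i` be a
`3`-dimensional `F`-vector space with a nondegenerate symmetric bilinear form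
`b_i` and an anticommutative product `×_i` satisfying
`(u ×_i v) ×_i v = b_i(u,v)v − b_i(v,v)u` (so `Q(V_i, b_i, ×_i)` is a quaternion
algebra), and let `μ₁, μ₂ ∈ F` be nonzero.  If `Q(V₁, μ₁b₁, ×₁)` and
`Q(V₂, μ₂b₂, ×₂)` are isomorphic as unital `F`-algebras, then `μ₁ = μ₂` and the
quaternion algebras `Q(V₁, b₁, ×₁)` and `Q(V₂, b₂, ×₂)` are isomorphic. -/
theorem stmt19 {F V₁ V₂ : Type*} [Field F]
    [AddCommGroup V₁] [Module F V₁] [AddCommGroup V₂] [Module F V₂]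
    (hchar : (2 : F) ≠ 0)
    (hdim₁ : Module.finrank F V₁ = 3) (hdim₂ : Module.finrank F V₂ = 3)
    (b₁ : V₁ →ₗ[F] V₁ →ₗ[F] F) (hsym₁ : ∀ u v : V₁, b₁ u v = b₁ v u)
    (hnd₁ : ∀ u : V₁, (∀ v : V₁, b₁ u v = 0) → u = 0)
    (c₁ : V₁ →ₗ[F] V₁ →ₗ[F] V₁) (hanti₁ : ∀ u v : V₁, c₁ u v = - c₁ v u)
    (hcross₁ : ∀ u v : V₁, c₁ (c₁ u v) v = b₁ u v • v - b₁ v v • u)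
    (b₂ : V₂ →ₗ[F] V₂ →ₗ[F] F) (hsym₂ : ∀ u v : V₂, b₂ u v = b₂ v u)
    (hnd₂ : ∀ u : V₂, (∀ v : V₂, b₂ u v = 0) → u = 0)
    (c₂ : V₂ →ₗ[F] V₂ →ₗ[F] V₂) (hanti₂ : ∀ u v : V₂, c₂ u v = - c₂ v u)
    (hcross₂ : ∀ u v : V₂, c₂ (c₂ u v) v = b₂ u v • v - b₂ v v • u)
    (μ₁ μ₂ : F) (hμ₁ : μ₁ ≠ 0) (hμ₂ : μ₂ ≠ 0)
    (hiso : ∃ φ : (F × V₁) ≃ₗ[F] (F × V₂),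
      φ ((1 : F), (0 : V₁)) = ((1 : F), (0 : V₂)) ∧
      ∀ x y : F × V₁,
        φ (qAlgMul (μ₁ • b₁) c₁ x y) = qAlgMul (μ₂ • b₂) c₂ (φ x) (φ y)) :
    μ₁ = μ₂ ∧
    ∃ ψ : (F × V₁) ≃ₗ[F] (F × V₂),
      ψ ((1 : F), (0 : V₁)) = ((1 : F), (0 : V₂)) ∧
      ∀ x y : F × V₁,
        ψ (qAlgMul b₁ c₁ x y) = qAlgMul b₂ c₂ (ψ x) (ψ y) := by
  obtain ⟨φ, h1, hmul⟩ := hiso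
  have hfd₁ : FiniteDimensional F V₁ :=
    Module.finite_of_finrank_pos (by rw [hdim₁]; norm_num)
  have hfd₂ : FiniteDimensional F V₂ :=
    Module.finite_of_finrank_pos (by rw [hdim₂]; norm_num)
  -- c u u = 0
  have hc₁0 : ∀ u : V₁, c₁ u u = 0 := by
    intro u
    have h := hanti₁ u u
    have h2 : (2 : F) • c₁ u u = 0 := by
      rw [two_smul]; nth_rewrite 1 [h]; exact neg_add_cancel _
    exact (smul_eq_zero.mp h2).resolve_left hchar
  have hc₂0 : ∀ w : V₂, c₂ w w = 0 := by
    intro w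
    have h := hanti₂ w w
    have h2 : (2 : F) • c₂ w w = 0 := by
      rw [two_smul]; nth_rewrite 1 [h]; exact neg_add_cancel _
    exact (smul_eq_zero.mp h2).resolve_left hchar
  -- φ of pure vectors is pure
  have hpure : ∀ u : V₁, (φ (0, u)).1 = 0 := by
    intro u
    have hsq := hmul (0, u) (0, u)
    have hlhs : qAlgMul (μ₁ • b₁) c₁ ((0 : F), u) (0, u)
        = (-(μ₁ * b₁ u u)) • ((1 : F), (0 : V₁)) := by
      simp [qAlgMul, hc₁0, Prod.ext_iff]
    rw [hlhs, map_smul, h1] at hsq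
    set α := (φ (0, u)).1 with hα
    set w := (φ (0, u)).2 with hw
    have hsq2 := congrArg Prod.snd hsq
    have hsq1 := congrArg Prod.fst hsq
    simp only [qAlgMul, Prod.smul_fst, Prod.smul_snd, smul_eq_mul, mul_one, smul_zero] at hsq1 hsq2
    -- hsq2 : 0 = α • w + α • w + c₂ w w
    have hzw : ((2 : F) * α) • w = 0 := by
      rw [mul_smul, two_smul]
      rw [hc₂0] at hsq2
      simpa using hsq2.symm
    rcases smul_eq_zero.mp hzw with h0 | h0
    · rcases mul_eq_zero.mp h0 with h | h
      · exact absurd h hchar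
      · exact h
    · -- w = 0 : then φ (0,u) = (α, 0) = φ (α, 0), so u = 0 and α = 0
      have hφu : φ (0, u) = α • ((1 : F), (0 : V₂)) := by
        rw [Prod.ext_iff]; constructor
        · simp [hα]
        · simp [← hw, h0]
      rw [← h1, ← map_smul] at hφu
      have := φ.injective hφu
      have hu0 : u = 0 := by
        have h2 := congrArg Prod.snd this
        simpa using h2
      rw [hu0] at hα
      simp [hα, Prod.mk_zero_zero]
  -- the induced linear map on the pure parts
  set f : V₁ →ₗ[F] V₂ :=
    (LinearMap.snd F F V₂) ∘ₗ (φ : F × V₁ →ₗ[F] F × V₂) ∘ₗ (LinearMap.inr F F V₁) with hf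
  have hfapp : ∀ u : V₁, f u = (φ (0, u)).2 := fun u => rfl
  have hφf : ∀ x : F × V₁, φ x = (x.1, f x.2) := by
    intro x
    have hx : x = x.1 • ((1 : F), (0 : V₁)) + (0, x.2) := by
      rw [Prod.ext_iff]; simp
    rw [hx, map_add, map_smul, h1, Prod.ext_iff]
    constructor
    · simp [hpure]
    · simp [hfapp]
  -- surjectivity of f
  have hfsurj : ∀ w : V₂, ∃ u : V₁, f u = w := by
    intro w
    refine ⟨(φ.symm (0, w)).2, ?_⟩
    have := hφf (φ.symm (0, w))
    rw [φ.apply_symm_apply] at this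
    exact (congrArg Prod.snd this).symm
  -- key multiplicative identities
  have hkey : ∀ u v : V₁,
      μ₁ * b₁ u v = μ₂ * b₂ (f u) (f v) ∧ f (c₁ u v) = c₂ (f u) (f v) := by
    intro u v
    have h := hmul (0, u) (0, v)
    rw [hφf ((0 : F), u), hφf ((0 : F), v), hφf (qAlgMul (μ₁ • b₁) c₁ (0, u) (0, v))] at h
    have hfst := congrArg Prod.fst h
    have hsnd := congrArg Prod.snd h
    simp only [qAlgMul, LinearMap.smul_apply, smul_eq_mul, zero_mul, zero_sub, zero_smul,
      zero_add, add_zero] at hfst hsnd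
    refine ⟨?_, hsnd⟩
    first
    | linear_combination hfst
    | linear_combination -hfst
  have hA : ∀ u v : V₁, μ₁ * b₁ u v = μ₂ * b₂ (f u) (f v) := fun u v => (hkey u v).1
  have hB : ∀ u v : V₁, f (c₁ u v) = c₂ (f u) (f v) := fun u v => (hkey u v).2
  -- the cross-product relation transported
  have hstar : ∀ u v : V₁,
      (b₁ u v - b₂ (f u) (f v)) • f v = (b₁ v v - b₂ (f v) (f v)) • f u := by
    intro u v
    have e1 : f (c₁ (c₁ u v) v) = c₂ (c₂ (f u) (f v)) (f v) := by rw [hB, hB]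
    rw [hcross₁, hcross₂, map_sub, map_smul, map_smul] at e1
    rw [sub_smul, sub_smul, sub_eq_sub_iff_sub_eq_sub]
    exact e1
  -- diagonal values agree
  have hbb : ∀ v : V₁, b₂ (f v) (f v) = b₁ v v := by
    intro v
    by_contra hne
    obtain ⟨w, hw⟩ : ∃ w : V₂, w ∉ Submodule.span F {f v} := by
      by_contra h
      push_neg at h
      have htop : Submodule.span F {f v} = ⊤ := Submodule.eq_top_iff'.mpr h
      by_cases hv0 : f v = 0
      · rw [hv0, Submodule.span_zero_singleton] at htop
        have hsub : ∀ x : V₂, x = 0 := fun x => by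
          have hx : x ∈ (⊥ : Submodule F V₂) := htop ▸ Submodule.mem_top
          simpa using hx
        have : Subsingleton V₂ := ⟨fun a b => by rw [hsub a, hsub b]⟩
        have h0 : Module.finrank F V₂ = 0 := Module.finrank_zero_of_subsingleton
        omega
      · have h1' : Module.finrank F ↥(Submodule.span F {f v}) = 1 :=
          finrank_span_singleton hv0
        rw [htop, finrank_top] at h1'
        omega
    obtain ⟨u, hu⟩ := hfsurj w
    have h := hstar u v
    have hd : b₁ v v - b₂ (f v) (f v) ≠ 0 := sub_ne_zero.mpr (Ne.symm hne)
    apply hw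
    rw [Submodule.mem_span_singleton]
    refine ⟨(b₁ v v - b₂ (f v) (f v))⁻¹ * (b₁ u v - b₂ (f u) (f v)), ?_⟩
    rw [mul_smul, h, ← mul_smul, inv_mul_cancel₀ hd, one_smul, hu]
  -- full agreement by polarization
  have hbeq : ∀ u v : V₁, b₂ (f u) (f v) = b₁ u v := by
    intro u v
    have h0 := hbb (u + v)
    simp only [map_add, LinearMap.add_apply] at h0
    have h1' := hbb u
    have h2' := hbb v
    have key : 2 * b₂ (f u) (f v) = 2 * b₁ u v := by
      linear_combination h0 - h1' - h2' - hsym₂ (f v) (f u) + hsym₁ v u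
    exact mul_left_cancel₀ hchar key
  -- μ₁ = μ₂
  have hnt : Nontrivial V₁ := Module.nontrivial_of_finrank_pos (R := F) (by rw [hdim₁]; norm_num)
  obtain ⟨u₀, hu₀⟩ := exists_ne (0 : V₁)
  obtain ⟨v₀, hb₀⟩ : ∃ v : V₁, b₁ u₀ v ≠ 0 := by
    by_contra h
    push_neg at h
    exact hu₀ (hnd₁ u₀ h)
  have hμeq : μ₁ = μ₂ := by
    have := hA u₀ v₀
    rw [hbeq] at this
    exact mul_right_cancel₀ hb₀ this
  refine ⟨hμeq, φ, h1, ?_⟩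
  intro x y
  rw [hφf (qAlgMul b₁ c₁ x y), hφf x, hφf y]
  simp only [qAlgMul, Prod.mk.injEq]
  constructor
  · rw [hbeq]
  · rw [map_add, map_add, map_smul, map_smul, hB]
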